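/- Let L ≥ 2γ > 0 and let (t_i)_{i≥1} be a sequence of real numbers such that t_1 ≥ 4L/γ and t_{i+1} ≥ (L/γ)·(t_i − 4) for every i ≥ 1. Then for every n ≥ 1, the total ∑_{i=1}^n t_i ≥ (L/γ)^{n−1} · (t_1 − 4L/(L−γ)) and each t_i ≥ 0. -/

import Mathlib

/-!
Write `r = L/γ` and `c = 4L/(L-γ)`, the fixed point of `x ↦ r (x - 4)`. The recursion says
`t (i+1) - c ≥ r (t i - c)`, so `t n - c ≥ r^(n-1) (t 1 - c)`. Since `L ≥ 2γ` gives
`c ≤ 4L/γ ≤ t 1`, this lower bound is nonnegative, whence `t n ≥ c > 0`, and the sum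
dominates its last term.
-/

theorem pow_mul_sub_add_le_of_mul_sub_add_le_succ {r c : ℝ} (hr : 0 ≤ r) {u : ℕ → ℝ}
    (hu : ∀ i, r * (u i - c) + c ≤ u (i + 1)) (n : ℕ) :
    r ^ n * (u 0 - c) + c ≤ u n := by
  induction n with
  | zero => simp
  | succ n ih =>
    calc r ^ (n + 1) * (u 0 - c) + c = r * (r ^ n * (u 0 - c) + c - c) + c := by ring
      _ ≤ r * (u n - c) + c := by gcongr
      _ ≤ u (n + 1) := hu n

theorem div_mul_sub_eq_div_mul_sub_add {L γ : ℝ} (hγ : γ ≠ 0) (hLγ : L - γ ≠ 0) (a x : ℝ) :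
    L / γ * (x - a) = L / γ * (x - a * L / (L - γ)) + a * L / (L - γ) := by
  field_simp
  ring

/-- Quantitative conclusion of the main theorem in abstract form: from `t 1 ≥ 4L/γ` and the
recursion `t (i+1) ≥ (L/γ)(t i - 4)`, each `t i` is nonnegative and the total time to pass
`n` saddle points is at least `(L/γ)^(n-1) (t 1 - 4L/(L-γ))`. -/
theorem total_escape_time_lower_bound
    (L γ : ℝ) (hγ : 0 < γ) (hL : 2 * γ ≤ L)
    (t : ℕ → ℝ)
    (ht1 : 4 * L / γ ≤ t 1)
    (hrec : ∀ i, 1 ≤ i → L / γ * (t i - 4) ≤ t (i + 1)) :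
    (∀ i, 1 ≤ i → 0 ≤ t i) ∧
    ∀ n, 1 ≤ n →
      (L / γ) ^ (n - 1) * (t 1 - 4 * L / (L - γ)) ≤ ∑ i ∈ Finset.Icc 1 n, t i := by
  have hLγ : 0 < L - γ := by linarith
  have hr : 0 ≤ L / γ := div_nonneg (by linarith) hγ.le
  have hc_pos : 0 < 4 * L / (L - γ) := by apply div_pos <;> linarith
  have hc_le : 4 * L / (L - γ) ≤ t 1 :=
    (div_le_div_of_nonneg_left (by linarith) hγ (by linarith)).trans ht1
  have hbound : ∀ n, 1 ≤ n →
      (L / γ) ^ (n - 1) * (t 1 - 4 * L / (L - γ)) + 4 * L / (L - γ) ≤ t n := by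
    intro n hn
    obtain ⟨m, rfl⟩ := Nat.exists_eq_add_of_le' hn
    refine pow_mul_sub_add_le_of_mul_sub_add_le_succ (u := fun i ↦ t (i + 1)) hr
      (fun i ↦ ?_) m
    rw [← div_mul_sub_eq_div_mul_sub_add hγ.ne' hLγ.ne']
    exact hrec (i + 1) (Nat.le_add_left 1 i)
  have htail : ∀ n, 0 ≤ (L / γ) ^ (n - 1) * (t 1 - 4 * L / (L - γ)) := fun n ↦
    mul_nonneg (pow_nonneg hr _) (by linarith)
  have hpos : ∀ i, 1 ≤ i → 0 ≤ t i := fun i hi ↦ by linarith [hbound i hi, htail i]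
  refine ⟨hpos, fun n hn ↦ ?_⟩
  calc (L / γ) ^ (n - 1) * (t 1 - 4 * L / (L - γ)) ≤ t n := by linarith [hbound n hn]
    _ ≤ ∑ i ∈ Finset.Icc 1 n, t i :=
      Finset.single_le_sum (fun i hi ↦ hpos i (Finset.mem_Icc.mp hi).1)
        (Finset.mem_Icc.mpr ⟨hn, le_rfl⟩)
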